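/- Supremizer enrichment gives inf–sup stability: let X, Y be finite-dimensional real inner product spaces and b : X × Y → ℝ a bilinear form. Define the supremizer T : Y → X by ⟨T q, v⟩_X = b(v, q) for all v ∈ X. If the reduced space X_R ⊆ X contains T(Y_R) for a subspace Y_R ⊆ Y, then inf_{q ∈ Y_R, q≠0} sup_{v ∈ X_R, v≠0} b(v,q)/(‖v‖‖q‖) ≥ inf_{q ∈ Y_R, q≠0} b(Tq, q)/(‖Tq‖‖q‖) = inf_{q ∈ Y_R, q≠0} ‖Tq‖/‖q‖, i.e., the reduced inf–sup constant is bounded below by the full inf–sup constant on Y_R. -/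

import Mathlib

/-- Supremizer enrichment gives inf–sup stability: if the reduced primal space
`XR` contains the supremizers `T q` of all `q ∈ YR`, then the reduced inf–sup
constant is bounded below by `inf_{q ∈ YR} ‖T q‖ / ‖q‖`, which equals
`inf_{q ∈ YR} b(Tq, q)/(‖Tq‖ ‖q‖)`. -/
theorem supremizer_inf_sup_stability
    {X Y : Type*} [NormedAddCommGroup X] [InnerProductSpace ℝ X] [FiniteDimensional ℝ X]
    [NormedAddCommGroup Y] [InnerProductSpace ℝ Y] [FiniteDimensional ℝ Y]
    (b : X →ₗ[ℝ] Y →ₗ[ℝ] ℝ) (T : Y → X)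
    (hT : ∀ (q : Y) (v : X), (inner ℝ (T q) v : ℝ) = b v q)
    (XR : Submodule ℝ X) (YR : Submodule ℝ Y)
    (hTXR : ∀ q ∈ YR, T q ∈ XR)
    (hTne : ∀ q ∈ YR, q ≠ 0 → T q ≠ 0) :
    ((⨅ q : {q : Y // q ∈ YR ∧ q ≠ 0}, ‖T q.1‖ / ‖q.1‖)
      ≤ ⨅ q : {q : Y // q ∈ YR ∧ q ≠ 0},
          ⨆ v : {v : X // v ∈ XR ∧ v ≠ 0}, b v.1 q.1 / (‖v.1‖ * ‖q.1‖)) ∧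
    ((⨅ q : {q : Y // q ∈ YR ∧ q ≠ 0}, b (T q.1) q.1 / (‖T q.1‖ * ‖q.1‖))
      = ⨅ q : {q : Y // q ∈ YR ∧ q ≠ 0}, ‖T q.1‖ / ‖q.1‖) := by
  have key : ∀ q : {q : Y // q ∈ YR ∧ q ≠ 0},
      b (T q.1) q.1 / (‖T q.1‖ * ‖q.1‖) = ‖T q.1‖ / ‖q.1‖ := by
    rintro ⟨q, hq, hq0⟩
    have hTq : T q ≠ 0 := hTne q hq hq0
    have hb : b (T q) q = ‖T q‖ ^ 2 := by
      rw [← hT q (T q), real_inner_self_eq_norm_sq]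
    have hTqn : ‖T q‖ ≠ 0 := norm_ne_zero_iff.mpr hTq
    rw [hb, sq, mul_div_mul_left _ _ hTqn]
  refine ⟨?_, iInf_congr key⟩
  by_cases hne : Nonempty {q : Y // q ∈ YR ∧ q ≠ 0}
  · apply ciInf_mono
    · exact ⟨0, by rintro x ⟨q, rfl⟩; positivity⟩
    · rintro ⟨q, hq, hq0⟩
      have hTq : T q ≠ 0 := hTne q hq hq0
      have hqn : (0:ℝ) < ‖q‖ := norm_pos_iff.mpr hq0
      have hbdd : BddAbove (Set.range fun v : {v : X // v ∈ XR ∧ v ≠ 0} =>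
          b v.1 q / (‖v.1‖ * ‖q‖)) := by
        refine ⟨‖T q‖ / ‖q‖, ?_⟩
        rintro x ⟨⟨v, hv, hv0⟩, rfl⟩
        have hvn : (0:ℝ) < ‖v‖ := norm_pos_iff.mpr hv0
        have hcs : b v q ≤ ‖T q‖ * ‖v‖ := by
          rw [← hT q v]; exact real_inner_le_norm _ _
        have : b v q / (‖v‖ * ‖q‖) ≤ (‖T q‖ * ‖v‖) / (‖v‖ * ‖q‖) :=
          div_le_div_of_nonneg_right hcs (by positivity) |>.trans_eq rfl
        calc b v q / (‖v‖ * ‖q‖) ≤ (‖T q‖ * ‖v‖) / (‖v‖ * ‖q‖) := this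
          _ = ‖T q‖ / ‖q‖ := by field_simp
      have hle := le_ciSup hbdd ⟨T q, hTXR q hq, hTq⟩
      calc ‖T q‖ / ‖q‖ = b (T q) q / (‖T q‖ * ‖q‖) := (key ⟨q, hq, hq0⟩).symm
        _ ≤ _ := hle
  · rw [not_nonempty_iff] at hne
    simp [iInf_of_isEmpty, Real.sInf_empty]
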